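/- (Cloud collapse identity) For g, h : X → [0,1], the cumulative distribution satisfies (β_g * β_h)~ = (β_{1-(1-g)(1-h)})~ - I_g * ρ¹ * I_h, where β_f is the cloud taking value 1-f(x₀) on level-0 markers (x₀), value f(x₀) on level-1 markers (x₀,x₁), and 0 on higher levels, and I_f is the cloud taking value f(x₀) on level-0 markers and 0 elsewhere. Consequently β_{g₁}*⋯*β_{gₙ} ⊴ β_{1-∏(1-g_i)} for any g₁,…,gₙ : X → [0,1]. -/

import Mathlib

/-- Convolution of clouds (real functions on markers, i.e. nonempty lists). -/
def cloudConv {X : Type*} (μ ν : List X → ℝ) : List X → ℝ :=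
  fun η => ∑ j ∈ Finset.range η.length, μ (η.take (j + 1)) * ν (η.drop j)

/-- Cumulative distribution of a cloud: `μ~(η) = Σ_{σ ⪯ η} μ(σ)`. -/
def cloudCum {X : Type*} (μ : List X → ℝ) : List X → ℝ :=
  fun η => ∑ j ∈ Finset.range η.length, μ (η.take (j + 1))

/-- The partial order `μ ⊴ ν`: `μ~(η) ≤ ν~(η)` for all markers `η`. -/
def cloudLE {X : Type*} (μ ν : List X → ℝ) : Prop :=
  ∀ η : List X, η ≠ [] → cloudCum μ η ≤ cloudCum ν η

/-- The cloud `β_f`: value `1 - f(x₀)` on level-0 markers `(x₀)`, value `f(x₀)`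
on level-1 markers `(x₀,x₁)`, and `0` on higher levels. -/
def cloudBeta {X : Type*} (f : X → ℝ) : List X → ℝ
  | [x] => 1 - f x
  | [x, _] => f x
  | _ => 0

/-- The cloud `I_f`: value `f(x₀)` on level-0 markers `(x₀)`, `0` elsewhere. -/
def cloudI {X : Type*} (f : X → ℝ) : List X → ℝ
  | [x] => f x
  | _ => 0

/-- `ρ¹`, the indicator cloud of level-1 markers (lists of length 2). -/
def rhoOne {X : Type*} : List X → ℝ :=
  fun η => if η.length = 2 then 1 else 0

/-- The convolution product `ν₁ * ⋯ * νₙ` (empty product = `ρ⁰ = I_1`). -/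
def cloudProd {X : Type*} {n : ℕ} (νs : Fin n → List X → ℝ) : List X → ℝ :=
  (List.ofFn νs).foldr cloudConv (cloudI fun _ => 1)

/-!
Peeling off the first point of a marker shows that the cumulative distribution of a convolution
is `(μ * ν)~ = μ * ν~`. Since `β_h~` is `1 - h(x₀)` at level 0 and `1` above, `β_g * β_h~` agrees
with `β_{1-(1-g)(1-h)}~` except at level-1 markers `(x₀, x₁)`, where it falls short by
`g(x₀) h(x₁) = (I_g * ρ¹ * I_h)(x₀, x₁)`. For the inequality, induct on `n`: left convolution by
a nonnegative cloud is monotone for `⊴`, and the defect `I_g * ρ¹ * I_h` is nonnegative.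
-/

section Cloud

variable {X : Type*}

lemma cloudCum_nil (μ : List X → ℝ) : cloudCum μ [] = 0 := rfl

lemma cloudCum_cons (μ : List X → ℝ) (a : X) (t : List X) :
    cloudCum μ (a :: t) = μ [a] + cloudCum (fun σ => μ (a :: σ)) t := by
  simp only [cloudCum, List.length_cons, Finset.sum_range_succ', List.take_succ_cons,
    List.take_zero, add_comm]

lemma cloudConv_nil (μ ν : List X → ℝ) : cloudConv μ ν [] = 0 := rfl

lemma cloudConv_cons (μ ν : List X → ℝ) (a : X) (t : List X) :
    cloudConv μ ν (a :: t) = μ [a] * ν (a :: t) + cloudConv (fun σ => μ (a :: σ)) ν t := by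
  simp only [cloudConv, List.length_cons, Finset.sum_range_succ', List.take_succ_cons,
    List.take_zero, List.drop_succ_cons, List.drop_zero, add_comm]

lemma cloudCum_eq_zero {μ : List X → ℝ} (hμ : ∀ a σ, μ (a :: σ) = 0) (η : List X) :
    cloudCum μ η = 0 := by
  cases η <;> simp [cloudCum, hμ]

lemma cloudConv_eq_zero_of_left {μ : List X → ℝ} (hμ : ∀ a σ, μ (a :: σ) = 0)
    (ν : List X → ℝ) (η : List X) : cloudConv μ ν η = 0 := by
  cases η <;> simp [cloudConv, hμ]

lemma cloudCum_mul_add (c : ℝ) (μ ν : List X → ℝ) (η : List X) :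
    cloudCum (fun σ => c * μ σ + ν σ) η = c * cloudCum μ η + cloudCum ν η := by
  simp only [cloudCum, Finset.sum_add_distrib, Finset.mul_sum]

theorem cloudCum_cloudConv (μ ν : List X → ℝ) :
    cloudCum (cloudConv μ ν) = cloudConv μ (cloudCum ν) := by
  funext η
  induction η generalizing μ with
  | nil => rfl
  | cons a t ih =>
    have hshift : (fun σ => cloudConv μ ν (a :: σ))
        = fun σ => μ [a] * ν (a :: σ) + cloudConv (fun σ => μ (a :: σ)) ν σ :=
      funext (cloudConv_cons μ ν a)
    rw [cloudCum_cons, hshift, cloudCum_mul_add, ih, cloudConv_cons, cloudConv_cons,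
      cloudConv_nil, cloudCum_cons]
    ring

lemma cloudLE_cloudConv_right {μ ν ν' : List X → ℝ} (hμ : 0 ≤ μ) (h : cloudLE ν ν') :
    cloudLE (cloudConv μ ν) (cloudConv μ ν') := by
  intro η hη
  rw [cloudCum_cloudConv, cloudCum_cloudConv]
  refine Finset.sum_le_sum fun j hj => mul_le_mul_of_nonneg_left (h _ ?_) (hμ _)
  simpa [List.drop_eq_nil_iff] using hj

lemma cloudConv_nonneg {μ ν : List X → ℝ} (hμ : 0 ≤ μ) (hν : 0 ≤ ν) : 0 ≤ cloudConv μ ν :=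
  fun _ => Finset.sum_nonneg fun _ _ => mul_nonneg (hμ _) (hν _)

lemma cloudI_nonneg {f : X → ℝ} (hf : 0 ≤ f) : 0 ≤ cloudI f
  | [x] => hf x
  | [] | _ :: _ :: _ => le_rfl

lemma rhoOne_nonneg : (0 : List X → ℝ) ≤ rhoOne := fun _ => by
  unfold rhoOne; positivity

lemma cloudBeta_nonneg {f : X → ℝ} (hf : ∀ x, 0 ≤ f x ∧ f x ≤ 1) : 0 ≤ cloudBeta f
  | [x] => sub_nonneg.2 (hf x).2
  | [x, _] => (hf x).1
  | [] | _ :: _ :: _ :: _ => le_rfl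

lemma cloudCum_cloudBeta_singleton (f : X → ℝ) (a : X) :
    cloudCum (cloudBeta f) [a] = 1 - f a := by
  simp [cloudCum_cons, cloudCum_nil, cloudBeta]

lemma cloudCum_cloudBeta_cons_cons (f : X → ℝ) (a b : X) (t : List X) :
    cloudCum (cloudBeta f) (a :: b :: t) = 1 := by
  rw [cloudCum_cons, cloudCum_cons, cloudCum_eq_zero fun _ _ => rfl]
  simp [cloudBeta]

lemma cloudCum_cloudI_one {η : List X} (hη : η ≠ []) : cloudCum (cloudI fun _ => 1) η = 1 := by
  obtain ⟨a, t, rfl⟩ := List.exists_cons_of_ne_nil hη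
  rw [cloudCum_cons, cloudCum_eq_zero fun _ _ => rfl]
  simp [cloudI]

theorem cloudCum_cloudConv_cloudBeta (g h : X → ℝ) {η : List X} (hη : η ≠ []) :
    cloudCum (cloudConv (cloudBeta g) (cloudBeta h)) η
      = cloudCum (cloudBeta fun x => 1 - (1 - g x) * (1 - h x)) η
        - cloudConv (cloudI g) (cloudConv rhoOne (cloudI h)) η := by
  rw [cloudCum_cloudConv]
  match η, hη with
  | [a], _ =>
    simp [cloudConv_cons, cloudConv_nil, cloudCum_cloudBeta_singleton, cloudBeta, cloudI, rhoOne]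
  | [a, b], _ =>
    simp [cloudConv_cons, cloudConv_nil, cloudCum_cloudBeta_singleton,
      cloudCum_cloudBeta_cons_cons, cloudBeta, cloudI, rhoOne]
    ring
  | a :: b :: c :: t, _ =>
    simp [cloudConv_cons, cloudConv_eq_zero_of_left, cloudCum_cloudBeta_cons_cons, cloudBeta,
      cloudI, rhoOne]

lemma cloudProd_zero (νs : Fin 0 → List X → ℝ) : cloudProd νs = cloudI fun _ => 1 := rfl

lemma cloudProd_succ {n : ℕ} (νs : Fin (n + 1) → List X → ℝ) :
    cloudProd νs = cloudConv (νs 0) (cloudProd fun i => νs i.succ) := by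
  simp [cloudProd, List.ofFn_succ]

theorem cloudLE_cloudProd_cloudBeta {n : ℕ} (g : Fin n → X → ℝ)
    (hg : ∀ i x, 0 ≤ g i x ∧ g i x ≤ 1) :
    cloudLE (cloudProd fun i => cloudBeta (g i)) (cloudBeta fun x => 1 - ∏ i, (1 - g i x)) := by
  induction n with
  | zero =>
    intro η hη
    obtain ⟨a, t, rfl⟩ := List.exists_cons_of_ne_nil hη
    rw [cloudProd_zero, cloudCum_cloudI_one hη]
    cases t <;> simp [cloudCum_cloudBeta_singleton, cloudCum_cloudBeta_cons_cons]
  | succ n ih =>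
    intro η hη
    set G : X → ℝ := fun x => 1 - ∏ i : Fin n, (1 - g i.succ x)
    have hG : 0 ≤ G := fun x => sub_nonneg.2 <| Finset.prod_le_one
      (fun i _ => sub_nonneg.2 (hg i.succ x).2) (fun i _ => sub_le_self _ (hg i.succ x).1)
    have hcollapse : (fun x => 1 - (1 - g 0 x) * (1 - G x)) = fun x => 1 - ∏ i, (1 - g i x) := by
      funext x
      simp [G, Fin.prod_univ_succ]
    have hdefect : 0 ≤ cloudConv (cloudI (g 0)) (cloudConv rhoOne (cloudI G)) η :=
      cloudConv_nonneg (cloudI_nonneg fun x => (hg 0 x).1)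
        (cloudConv_nonneg rhoOne_nonneg (cloudI_nonneg hG)) η
    calc cloudCum (cloudProd fun i => cloudBeta (g i)) η
        ≤ cloudCum (cloudConv (cloudBeta (g 0)) (cloudBeta G)) η := by
          rw [cloudProd_succ]
          exact cloudLE_cloudConv_right (cloudBeta_nonneg (hg 0))
            (ih (fun i => g i.succ) fun i => hg i.succ) η hη
      _ ≤ cloudCum (cloudBeta fun x => 1 - ∏ i, (1 - g i x)) η := by
          rw [cloudCum_cloudConv_cloudBeta _ _ hη, hcollapse]
          exact sub_le_self _ hdefect

end Cloud

/-- Cloud collapse identity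
`(β_g * β_h)~ = (β_{1-(1-g)(1-h)})~ - I_g * ρ¹ * I_h`, and consequently
`β_{g₁} * ⋯ * β_{gₙ} ⊴ β_{1-∏(1-gᵢ)}`. -/
theorem cloud_collapse {X : Type*} :
    (∀ g h : X → ℝ, (∀ x, 0 ≤ g x ∧ g x ≤ 1) → (∀ x, 0 ≤ h x ∧ h x ≤ 1) →
      ∀ η : List X, η ≠ [] →
        cloudCum (cloudConv (cloudBeta g) (cloudBeta h)) η
          = cloudCum (cloudBeta (fun x => 1 - (1 - g x) * (1 - h x))) η
            - cloudConv (cloudI g) (cloudConv rhoOne (cloudI h)) η)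
    ∧ ∀ (n : ℕ) (g : Fin n → X → ℝ), (∀ i x, 0 ≤ g i x ∧ g i x ≤ 1) →
        cloudLE (cloudProd fun i => cloudBeta (g i))
          (cloudBeta fun x => 1 - ∏ i, (1 - g i x)) :=
  ⟨fun g h _ _ _ hη => cloudCum_cloudConv_cloudBeta g h hη,
    fun _ => cloudLE_cloudProd_cloudBeta⟩
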